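/- Let P_1, …, P_h (h ≥ 3) be paths on the triangular grid admitting a system of non-representative edges u_1, …, u_h, and suppose three of these edges, say u_a, u_b, u_c, all lie on a common grid line, with u_b lying between u_a and u_c on that line. Then the path P_b (the member of the family not containing u_b) has at least three bends; in particular, a minimal non-(h−1)-Helly family of paths on the triangular grid containing three co-linear non-representative edges must contain a path with at least three bends. -/

import Mathlib

/-- The triangular grid: the simple graph on `ℤ × ℤ` where two points are adjacent
iff their difference is `±(1,0)`, `±(0,1)` or `±(1,1)`. -/
def TGrid : SimpleGraph (ℤ × ℤ) where
  Adj u v :=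
    (v.1 - u.1 = 1 ∧ v.2 - u.2 = 0) ∨ (v.1 - u.1 = -1 ∧ v.2 - u.2 = 0) ∨
    (v.1 - u.1 = 0 ∧ v.2 - u.2 = 1) ∨ (v.1 - u.1 = 0 ∧ v.2 - u.2 = -1) ∨
    (v.1 - u.1 = 1 ∧ v.2 - u.2 = 1) ∨ (v.1 - u.1 = -1 ∧ v.2 - u.2 = -1)
  symm := ⟨by intro u v h; omega⟩
  loopless := ⟨by intro u h; omega⟩

/-- The (symmetric) direction datum of a grid edge: the pair of absolute coordinate
differences.  For grid edges this is `(1,0)` (horizontal), `(0,1)` (vertical) or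
`(1,1)` (diagonal). -/
def edir (e : Sym2 (ℤ × ℤ)) : ℤ × ℤ :=
  Sym2.lift ⟨fun u v => (|u.1 - v.1|, |u.2 - v.2|), by
    intro u v; simp [abs_sub_comm]⟩ e

/-- The `t`-th edge of a walk. -/
def wEdge {u v : ℤ × ℤ} (p : TGrid.Walk u v) (t : ℕ) : Sym2 (ℤ × ℤ) :=
  s(p.getVert t, p.getVert (t + 1))

/-- The number of bends of a walk: the number of consecutive pairs of edges with
different directions. -/
def bendCount {u v : ℤ × ℤ} (p : TGrid.Walk u v) : ℕ :=
  (List.range (p.length - 1)).countP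
    (fun i => decide (edir (wEdge p i) ≠ edir (wEdge p (i + 1))))

/-- `b` is a bend point of the walk `p`. -/
def IsBendAt {u v : ℤ × ℤ} (p : TGrid.Walk u v) (b : ℤ × ℤ) : Prop :=
  ∃ i : ℕ, i + 2 ≤ p.length ∧ p.getVert (i + 1) = b ∧
    edir (wEdge p i) ≠ edir (wEdge p (i + 1))

/-- A (nontrivial simple) path on the triangular grid. -/
structure TPath where
  src : ℤ × ℤ
  dst : ℤ × ℤ
  walk : TGrid.Walk src dst
  isPath : walk.IsPath
  nontriv : 0 < walk.length

/-- The set of grid edges of a path. -/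
def pEdges (P : TPath) : Set (Sym2 (ℤ × ℤ)) := {e | e ∈ P.walk.edges}

/-- The set of grid points of a path. -/
def pPts (P : TPath) : Set (ℤ × ℤ) := {q | q ∈ P.walk.support}

/-- A segment of a path: a maximal straight (bend-free) subpath, recorded by the
interval of edge indices `[i, j)` it occupies. -/
structure Segment (P : TPath) where
  i : ℕ
  j : ℕ
  lt : i < j
  le : j ≤ P.walk.length
  straight : ∀ t, i ≤ t → t < j → edir (wEdge P.walk t) = edir (wEdge P.walk i)
  maxLeft : i = 0 ∨ edir (wEdge P.walk (i - 1)) ≠ edir (wEdge P.walk i)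
  maxRight : j = P.walk.length ∨ edir (wEdge P.walk (j - 1)) ≠ edir (wEdge P.walk j)

/-- The set of grid edges of a segment. -/
def Segment.edges {P : TPath} (s : Segment P) : Set (Sym2 (ℤ × ℤ)) :=
  {e | ∃ t, s.i ≤ t ∧ t < s.j ∧ e = wEdge P.walk t}

/-- The set of grid points of a segment. -/
def Segment.pts {P : TPath} (s : Segment P) : Set (ℤ × ℤ) :=
  {q | ∃ t, s.i ≤ t ∧ t ≤ s.j ∧ q = P.walk.getVert t}

/-- The direction of a segment. -/
def Segment.dir {P : TPath} (s : Segment P) : ℤ × ℤ := edir (wEdge P.walk s.i)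

/-- The three directions of the triangular grid. -/
inductive Dir | H | V | D
deriving DecidableEq

/-- The direction of the (straight) line from `a` to `b`. -/
def dirOf (a b : ℤ × ℤ) : Dir :=
  if a.2 = b.2 then .H else if a.1 = b.1 then .V else .D

/-- A grid line of the triangular grid: a full horizontal, vertical or diagonal line. -/
structure GridLine where
  dir : Dir
  c : ℤ

/-- The parametrization of the points of a grid line. -/
def GridLine.pt (l : GridLine) (t : ℤ) : ℤ × ℤ :=
  match l.dir with
  | .H => (t, l.c)
  | .V => (l.c, t)
  | .D => (l.c + t, t)

/-- The `t`-th edge of a grid line. -/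
def GridLine.edge (l : GridLine) (t : ℤ) : Sym2 (ℤ × ℤ) := s(l.pt t, l.pt (t + 1))

/-- The set of grid points of a grid line. -/
def GridLine.pts (l : GridLine) : Set (ℤ × ℤ) := Set.range l.pt

/-- The set of grid edges of a grid line. -/
def GridLine.edges (l : GridLine) : Set (Sym2 (ℤ × ℤ)) := Set.range l.edge

/-- A right triangle of the triangular grid, given by a base corner `p`, a leg
length `k ≥ 1`, and one of the two possible orientations. -/
structure RightTri where
  p : ℤ × ℤ
  k : ℤ
  hk : 1 ≤ k
  orientA : Bool

/-- The set of grid edges of a right triangle. -/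
def RightTri.edges (T : RightTri) : Set (Sym2 (ℤ × ℤ)) :=
  if T.orientA then
    {e | ∃ t : ℤ, 0 ≤ t ∧ t < T.k ∧
      (e = s((T.p.1 + t, T.p.2), (T.p.1 + t + 1, T.p.2)) ∨
       e = s((T.p.1 + T.k, T.p.2 + t), (T.p.1 + T.k, T.p.2 + t + 1)) ∨
       e = s((T.p.1 + t, T.p.2 + t), (T.p.1 + t + 1, T.p.2 + t + 1)))}
  else
    {e | ∃ t : ℤ, 0 ≤ t ∧ t < T.k ∧
      (e = s((T.p.1, T.p.2 + t), (T.p.1, T.p.2 + t + 1)) ∨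
       e = s((T.p.1 + t, T.p.2 + T.k), (T.p.1 + t + 1, T.p.2 + T.k)) ∨
       e = s((T.p.1 + t, T.p.2 + t), (T.p.1 + t + 1, T.p.2 + t + 1)))}

/-- The three corners of a right triangle. -/
def RightTri.corners (T : RightTri) : Set (ℤ × ℤ) :=
  if T.orientA then {T.p, (T.p.1 + T.k, T.p.2), (T.p.1 + T.k, T.p.2 + T.k)}
  else {T.p, (T.p.1, T.p.2 + T.k), (T.p.1 + T.k, T.p.2 + T.k)}

/-- `U(𝒫)`: the subgraph of the grid formed by all segments of members of the family
that share at least one grid edge with another member, given by its set of edges. -/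
def UEdges {ι : Type} (P : ι → TPath) : Set (Sym2 (ℤ × ℤ)) :=
  {e | ∃ i : ι, ∃ s : Segment (P i), e ∈ s.edges ∧
        ∃ j : ι, j ≠ i ∧ (s.edges ∩ pEdges (P j)).Nonempty}

/-- A B₁-EPGₜ representation of a simple graph `G`: a family of at most-one-bend
paths on the triangular grid whose edge-intersection graph is `G`. -/
def IsB1EPGtRep {V : Type} (G : SimpleGraph V) (Rep : V → TPath) : Prop :=
  (∀ v, bendCount (Rep v).walk ≤ 1) ∧
  ∀ u v : V, u ≠ v → (G.Adj u v ↔ (pEdges (Rep u) ∩ pEdges (Rep v)).Nonempty)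

/-!
Let `s < t` be the positions of `u_a` and `u_c` on `P_b`. If `P_b` did not bend between
them, it would run straight along the grid line from `u_a` to `u_c` and so contain `u_b`.
Let `i ≥ s` be the first bend; up to `i` the path runs along the line. There is a later
bend before `t`: otherwise the straight run after `i` contains `u_c`, so it is parallel to the
line, and `i` is no bend. Let `j` be the first bend after `i`. There is a third one after `j`:
otherwise the run after `j` contains `u_c`, so it lies on the line, and the straight run from
`i + 1` to `j` joins two points of the line, hence is parallel to it, and again `i` is no bend.
-/

open SimpleGraph

def Dir.vec : Dir → ℤ × ℤ
  | .H => (1, 0)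
  | .V => (0, 1)
  | .D => (1, 1)

def gridSteps : Set (ℤ × ℤ) := {(1, 0), (-1, 0), (0, 1), (0, -1), (1, 1), (-1, -1)}

lemma TGrid.sub_mem_gridSteps {p q : ℤ × ℤ} (h : TGrid.Adj p q) : q - p ∈ gridSteps := by
  simp only [TGrid, gridSteps, Set.mem_insert_iff, Set.mem_singleton_iff, Prod.ext_iff,
    Prod.fst_sub, Prod.snd_sub] at h ⊢
  omega

lemma eq_or_eq_neg_of_mem_gridSteps {d e : ℤ × ℤ} (hd : d ∈ gridSteps) (he : e ∈ gridSteps)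
    (h : (|d.1|, |d.2|) = (|e.1|, |e.2|)) : e = d ∨ e = -d := by
  simp only [gridSteps, Set.mem_insert_iff, Set.mem_singleton_iff] at hd he
  rcases hd with rfl | rfl | rfl | rfl | rfl | rfl <;>
    rcases he with rfl | rfl | rfl | rfl | rfl | rfl <;> simp_all

namespace GridLine

variable (l : GridLine)

lemma pt_add (r z : ℤ) : l.pt (r + z) = l.pt r + z • l.dir.vec := by
  obtain ⟨d, c⟩ := l
  cases d <;> ext <;> simp [pt, Dir.vec]; ring

lemma pt_injective : Function.Injective l.pt := by
  intro r r' h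
  obtain ⟨d, c⟩ := l
  cases d <;> simp [pt, Prod.ext_iff] at h <;> omega

lemma mk_pt_eq_edge_iff {x y r : ℤ} :
    s(l.pt x, l.pt y) = l.edge r ↔ (x = r ∧ y = r + 1) ∨ (x = r + 1 ∧ y = r) := by
  simp only [edge, Sym2.eq_iff, l.pt_injective.eq_iff]

lemma edge_injective : Function.Injective l.edge := by
  intro r r' h
  have := (l.mk_pt_eq_edge_iff).1 h
  omega

lemma edir_edge (r : ℤ) : edir (l.edge r) = l.dir.vec := by
  obtain ⟨d, c⟩ := l
  cases d <;> simp [edge, edir, pt, Dir.vec]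

lemma abs_eq_vec_of_pt_eq_add_smul {d : ℤ × ℤ} (hd : d ∈ gridSteps) {x y n : ℤ}
    (hn : n ≠ 0) (h : l.pt y = l.pt x + n • d) : (|d.1|, |d.2|) = l.dir.vec := by
  obtain ⟨dir, c⟩ := l
  simp only [gridSteps, Set.mem_insert_iff, Set.mem_singleton_iff] at hd
  rcases hd with rfl | rfl | rfl | rfl | rfl | rfl <;> cases dir <;>
    simp_all [pt, Dir.vec, Prod.ext_iff] <;> omega

end GridLine

section Walk

variable {x y : ℤ × ℤ} (w : TGrid.Walk x y)

def wStep (k : ℕ) : ℤ × ℤ := w.getVert (k + 1) - w.getVert k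

-- edges `s, …, t` of `w` all have the same direction
def NoBendOn (s t : ℕ) : Prop :=
  ∀ k, s ≤ k → k < t → edir (wEdge w k) = edir (wEdge w (k + 1))

lemma wStep_mem_gridSteps {k : ℕ} (hk : k < w.length) : wStep w k ∈ gridSteps :=
  TGrid.sub_mem_gridSteps (w.adj_getVert_succ hk)

lemma edir_wEdge (k : ℕ) : edir (wEdge w k) = (|(wStep w k).1|, |(wStep w k).2|) := by
  simp [wEdge, edir, wStep, abs_sub_comm]

lemma getVert_succ_eq_add_wStep (k : ℕ) : w.getVert (k + 1) = w.getVert k + wStep w k := by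
  simp [wStep]

variable {w}

lemma NoBendOn.edir_eq {s t : ℕ} (h : NoBendOn w s t) {k : ℕ} (hsk : s ≤ k) (hkt : k ≤ t) :
    edir (wEdge w k) = edir (wEdge w s) := by
  induction k, hsk using Nat.le_induction with
  | base => rfl
  | succ k hsk ih => rw [← h k hsk (by omega), ih (by omega)]

lemma wStep_succ_eq_of_edir_eq (hp : w.IsPath) {k : ℕ} (hk : k + 1 < w.length)
    (he : edir (wEdge w k) = edir (wEdge w (k + 1))) : wStep w (k + 1) = wStep w k := by
  rw [edir_wEdge, edir_wEdge] at he
  refine (eq_or_eq_neg_of_mem_gridSteps (wStep_mem_gridSteps w (by omega))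
    (wStep_mem_gridSteps w hk) he).resolve_right fun hback => ?_
  -- stepping straight back would revisit `w.getVert k`
  have hret : w.getVert (k + 2) = w.getVert k := by
    rw [getVert_succ_eq_add_wStep, getVert_succ_eq_add_wStep, hback, add_neg_cancel_right]
  exact absurd (hp.getVert_injOn (by simp; omega) (by simp; omega) hret) (by omega)

lemma NoBendOn.wStep_eq (hp : w.IsPath) {s t : ℕ} (h : NoBendOn w s t) (ht : t < w.length)
    {k : ℕ} (hsk : s ≤ k) (hkt : k ≤ t) : wStep w k = wStep w s := by
  induction k, hsk using Nat.le_induction with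
  | base => rfl
  | succ k hsk ih =>
    rw [wStep_succ_eq_of_edir_eq hp (by omega) (h k hsk (by omega)), ih (by omega)]

lemma NoBendOn.getVert_eq (hp : w.IsPath) {s t : ℕ} (h : NoBendOn w s t) (ht : t < w.length)
    {k : ℕ} (hsk : s ≤ k) (hkt : k ≤ t + 1) :
    w.getVert k = w.getVert s + ((k : ℤ) - s) • wStep w s := by
  induction k, hsk using Nat.le_induction with
  | base => simp
  | succ k hsk ih =>
    rw [getVert_succ_eq_add_wStep, ih (by omega), h.wStep_eq hp ht hsk (by omega)]
    push_cast
    module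

lemma NoBendOn.exists_getVert_eq_pt (hp : w.IsPath) {s t : ℕ} (h : NoBendOn w s t)
    (ht : t < w.length) {m : ℕ} (hsm : s ≤ m) (hmt : m ≤ t) {l : GridLine} {r : ℤ}
    (hm : wEdge w m = l.edge r) :
    ∃ p ε : ℤ, (ε = 1 ∨ ε = -1) ∧
      ∀ k, s ≤ k → k ≤ t + 1 → w.getVert k = l.pt (p + ε * k) := by
  obtain ⟨p, ε, hε, hpm, hstep⟩ : ∃ p ε : ℤ, (ε = 1 ∨ ε = -1) ∧
      w.getVert m = l.pt p ∧ wStep w m = ε • l.dir.vec := by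
    rcases Sym2.eq_iff.1 hm with ⟨h0, h1⟩ | ⟨h0, h1⟩
    · refine ⟨r, 1, .inl rfl, h0, ?_⟩
      rw [wStep, h0, h1, l.pt_add]
      simp
    · refine ⟨r + 1, -1, .inr rfl, h0, ?_⟩
      rw [wStep, h0, h1, l.pt_add]
      simp
  refine ⟨p - ε * m, ε, hε, fun k hsk hkt => ?_⟩
  have hkm : w.getVert k = w.getVert m + ((k : ℤ) - m) • wStep w m := by
    rw [h.getVert_eq hp ht hsk hkt, h.getVert_eq hp ht hsm (by omega), h.wStep_eq hp ht hsm hmt]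
    module
  rw [hkm, hpm, hstep, smul_smul, ← l.pt_add]
  congr 1
  ring

end Walk

section Bends

variable {x y : ℤ × ℤ} {w : TGrid.Walk x y}

lemma edge_mem_edges_iff_exists_wEdge {l : GridLine} {r : ℤ} :
    l.edge r ∈ w.edges ↔ ∃ k < w.length, wEdge w k = l.edge r :=
  w.mk_mem_edges_iff_exists

lemma NoBendOn.edge_mem_edges (hp : w.IsPath) {s t : ℕ} (h : NoBendOn w s t)
    (hst : s ≤ t) (ht : t < w.length) {l : GridLine} {ra rb rc : ℤ}
    (hs : wEdge w s = l.edge ra) (htc : wEdge w t = l.edge rc)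
    (hb : (ra < rb ∧ rb < rc) ∨ (rc < rb ∧ rb < ra)) : l.edge rb ∈ w.edges := by
  obtain ⟨p, ε, hε, hpt⟩ := h.exists_getVert_eq_pt hp ht le_rfl hst hs
  have hedge : ∀ k, s ≤ k → k ≤ t →
      wEdge w k = s(l.pt (p + ε * k), l.pt (p + ε * k + ε)) := by
    intro k hsk hkt
    rw [wEdge, hpt k hsk (by omega), hpt (k + 1) (by omega) (by omega)]
    push_cast
    ring_nf
  rw [hedge s le_rfl hst, l.mk_pt_eq_edge_iff] at hs
  rw [hedge t hst le_rfl, l.mk_pt_eq_edge_iff] at htc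
  rw [edge_mem_edges_iff_exists_wEdge]
  rcases hε with rfl | rfl
  · refine ⟨(rb - p).toNat, by omega, ?_⟩
    rw [hedge _ (by omega) (by omega), l.mk_pt_eq_edge_iff]
    omega
  · refine ⟨(p - rb - 1).toNat, by omega, ?_⟩
    rw [hedge _ (by omega) (by omega), l.mk_pt_eq_edge_iff]
    omega

lemma exists_first_bend {s t : ℕ} (h : ¬NoBendOn w s t) :
    ∃ i, s ≤ i ∧ i < t ∧ edir (wEdge w i) ≠ edir (wEdge w (i + 1)) ∧
      NoBendOn w s i := by
  classical
  have hex : ∃ i, s ≤ i ∧ i < t ∧ edir (wEdge w i) ≠ edir (wEdge w (i + 1)) := by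
    simpa [NoBendOn] using h
  obtain ⟨hsi, hit, hbend⟩ := Nat.find_spec hex
  refine ⟨Nat.find hex, hsi, hit, hbend, fun k hsk hki => ?_⟩
  by_contra hk
  exact Nat.find_min hex hki ⟨hsk, by omega, hk⟩

lemma three_le_bendCount {i j k : ℕ} (hij : i < j) (hjk : j < k) (hlen : k + 2 ≤ w.length)
    (hi : edir (wEdge w i) ≠ edir (wEdge w (i + 1)))
    (hj : edir (wEdge w j) ≠ edir (wEdge w (j + 1)))
    (hk : edir (wEdge w k) ≠ edir (wEdge w (k + 1))) : 3 ≤ bendCount w := by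
  have hsub : [i, j, k] ⊆ (List.range (w.length - 1)).filter
      (fun n => decide (edir (wEdge w n) ≠ edir (wEdge w (n + 1)))) := by
    simp only [List.cons_subset, List.mem_filter, List.mem_range, decide_eq_true_eq]
    exact ⟨⟨by omega, hi⟩, ⟨by omega, hj⟩, ⟨by omega, hk⟩, List.nil_subset _⟩
  calc 3 = [i, j, k].length := rfl
    _ ≤ _ := (List.Nodup.subperm (by simp; omega) hsub).length_le
    _ = bendCount w := List.countP_eq_length_filter.symm

end Bends

theorem three_le_bendCount_of_skipped_edge {x y : ℤ × ℤ} {w : TGrid.Walk x y} (hp : w.IsPath)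
    {s t : ℕ} (hst : s < t) (ht : t < w.length) {l : GridLine} {ra rb rc : ℤ}
    (hs : wEdge w s = l.edge ra) (htc : wEdge w t = l.edge rc)
    (hb : (ra < rb ∧ rb < rc) ∨ (rc < rb ∧ rb < ra)) (hmiss : l.edge rb ∉ w.edges) :
    3 ≤ bendCount w := by
  obtain ⟨i, hsi, hit, hbi, hA⟩ :=
    exists_first_bend fun h => hmiss (h.edge_mem_edges hp hst.le ht hs htc hb)
  have hdir_i : edir (wEdge w i) = l.dir.vec := by
    rw [hA.edir_eq hsi le_rfl, hs, l.edir_edge]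
  obtain ⟨j, hij, hjt, hbj, hB⟩ :=
      exists_first_bend (w := w) (s := i + 1) (t := t) fun hC => hbi <| by
        rw [hdir_i, ← hC.edir_eq (k := t) (by omega) le_rfl, htc, l.edir_edge]
  obtain ⟨k, hjk, hkt, hbk, -⟩ :=
      exists_first_bend (w := w) (s := j + 1) (t := t) fun hC => hbi <| by
        -- the straight run from `i + 1` to `j + 1` joins two points of `l`
        obtain ⟨p, ε, -, hpA⟩ := hA.exists_getVert_eq_pt hp (by omega) le_rfl hsi hs
        obtain ⟨q, δ, -, hpC⟩ := hC.exists_getVert_eq_pt hp ht (by omega) le_rfl htc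
        have hBj := hB.getVert_eq hp (by omega) (k := j + 1) (by omega) le_rfl
        rw [hpA (i + 1) (by omega) le_rfl, hpC (j + 1) le_rfl (by omega)] at hBj
        rw [hdir_i, edir_wEdge, l.abs_eq_vec_of_pt_eq_add_smul
          (wStep_mem_gridSteps w (by omega)) (by omega) hBj]
  exact three_le_bendCount hij hjk (by omega) hbi hbj hbk

theorem stmt5_general (h : ℕ)
    (P : Fin h → TPath) (u : Fin h → Sym2 (ℤ × ℤ))
    (hmiss : ∀ i, u i ∉ pEdges (P i))
    (hhit : ∀ i j, i ≠ j → u i ∈ pEdges (P j))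
    (a b c : Fin h) (hab : a ≠ b) (hbc : b ≠ c)
    (l : GridLine) (ta tb tc : ℤ)
    (hea : u a = l.edge ta) (heb : u b = l.edge tb) (hec : u c = l.edge tc)
    (hbetween : (ta < tb ∧ tb < tc) ∨ (tc < tb ∧ tb < ta)) :
    3 ≤ bendCount (P b).walk := by
  obtain ⟨s, hs, hsa⟩ := edge_mem_edges_iff_exists_wEdge.1 (hea ▸ hhit a b hab)
  obtain ⟨t, ht, htc⟩ := edge_mem_edges_iff_exists_wEdge.1 (hec ▸ hhit c b hbc.symm)
  have hmb : l.edge tb ∉ (P b).walk.edges := heb ▸ hmiss b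
  have hst : s ≠ t := by
    rintro rfl
    have := l.edge_injective (hsa.symm.trans htc)
    omega
  rcases hst.lt_or_gt with hst | hts
  · exact three_le_bendCount_of_skipped_edge (P b).isPath hst ht hsa htc hbetween hmb
  · exact three_le_bendCount_of_skipped_edge (P b).isPath hts hs htc hsa hbetween.symm hmb

/-- If a family of paths on the triangular grid admits a system of
non-representative edges, three of which lie on a common grid line with one between
the other two, then the path missing the middle edge has at least three bends. -/
theorem stmt5 (h : ℕ) (hh : 3 ≤ h)
    (P : Fin h → TPath) (u : Fin h → Sym2 (ℤ × ℤ))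
    (hinj : Function.Injective u)
    (hmiss : ∀ i, u i ∉ pEdges (P i))
    (hhit : ∀ i j, i ≠ j → u i ∈ pEdges (P j))
    (a b c : Fin h) (hab : a ≠ b) (hbc : b ≠ c) (hac : a ≠ c)
    (l : GridLine) (ta tb tc : ℤ)
    (hea : u a = l.edge ta) (heb : u b = l.edge tb) (hec : u c = l.edge tc)
    (hbetween : (ta < tb ∧ tb < tc) ∨ (tc < tb ∧ tb < ta)) :
    3 ≤ bendCount (P b).walk :=
  stmt5_general h P u hmiss hhit a b c hab hbc l ta tb tc hea heb hec hbetween
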